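/- arXiv:1102.2065 — 3 statements merged into one kernel-verified Lean document; each statement's English description precedes it below -/
import Mathlib

section
/- Let S_2 be the eventually periodic sequence in Z/4Z with initial block 21210130 followed by the infinitely repeated period 200132022112002110220130. Then for every integer k ≥ 0, the Steinhaus triangle of the initial segment S_2[8k] of length 8k is strongly balanced in Z/4Z. -/
/-- Next row of a Steinhaus triangle: pairwise sums of adjacent entries. -/
def nextRow {m : ℕ} (l : List (ZMod m)) : List (ZMod m) :=
  List.zipWith (· + ·) l l.tail

/-- The rows of the Steinhaus triangle generated by the first row `l`. -/
def triangleRows {m : ℕ} (l : List (ZMod m)) : List (List (ZMod m)) :=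
  (List.range l.length).map (fun i => nextRow^[i] l)

/-- All entries of the Steinhaus triangle generated by `l`. -/
def triangleEntries {m : ℕ} (l : List (ZMod m)) : List (ZMod m) :=
  (triangleRows l).flatten

/-- The Steinhaus triangle of `l` is balanced: all elements of `ZMod m`
occur with the same multiplicity among its entries. -/
def IsBalanced {m : ℕ} (l : List (ZMod m)) : Prop :=
  ∀ a b : ZMod m, (triangleEntries l).count a = (triangleEntries l).count b

/-- The Steinhaus triangle of `l` is strongly balanced (with respect to a
given `step`): for every `t` with `step * t ≤ l.length`, the Steinhaus triangle
of the initial segment of `l` of length `l.length - step * t` is balanced. -/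
def IsStronglyBalanced {m : ℕ} (step : ℕ) (l : List (ZMod m)) : Prop :=
  ∀ t : ℕ, step * t ≤ l.length → IsBalanced (l.take (l.length - step * t))

/-- The eventually periodic sequence with initial block `I` and period `P`. -/
def evPeriodic {m : ℕ} (I P : List (ZMod m)) : ℕ → ZMod m :=
  fun i => if i < I.length then I.getD i 0 else P.getD ((i - I.length) % P.length) 0

/-- The initial segment of length `l` of the sequence `S`. -/
def seg {m : ℕ} (S : ℕ → ZMod m) (l : ℕ) : List (ZMod m) :=
  (List.range l).map S

def S2 : ℕ → ZMod 4 :=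
  evPeriodic ([2,1,2,1,0,1,3,0] : List (ZMod 4)) ([2,0,0,1,3,2,0,2,2,1,1,2,0,0,2,1,1,0,2,2,0,1,3,0] : List (ZMod 4))


/-!
Every row of the infinite Steinhaus triangle of `S2` is again eventually periodic, with a
preperiod of length `8` and a period of length `24`, and from row `8` on the rows themselves
repeat with period `24`. Cutting off the top `8` rows of the triangle of side `8 * n` and using
this double periodicity, the triangle of side `8 * n + 32` is that of side `8 * n + 8` plus an
increment, and the increment changes by a balanced multiset whenever `n` grows by `3`. So
balancedness for all `n` follows from finitely many base cases, checked by computation.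
-/

open Finset

namespace Multiset

variable {α : Type*} [DecidableEq α]

def IsBalanced (s : Multiset α) : Prop :=
  ∀ a b, s.count a = s.count b

theorem IsBalanced.add {s t : Multiset α} (hs : s.IsBalanced) (ht : t.IsBalanced) :
    (s + t).IsBalanced := fun a b => by
  simp only [count_add, hs a b, ht a b]

instance [Fintype α] (s : Multiset α) : Decidable s.IsBalanced :=
  inferInstanceAs (Decidable (∀ a b, s.count a = s.count b))

end Multiset

section Triangle

variable {m : ℕ}

def nextSeq (S : ℕ → ZMod m) : ℕ → ZMod m := fun j => S j + S (j + 1)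

theorem length_seg (S : ℕ → ZMod m) (n : ℕ) : (seg S n).length = n := by
  simp [seg]

theorem take_seg (S : ℕ → ZMod m) {a n : ℕ} (h : a ≤ n) : (seg S n).take a = seg S a := by
  rw [seg, ← List.map_take, List.take_range, Nat.min_eq_left h, seg]

theorem nextRow_seg (S : ℕ → ZMod m) (n : ℕ) :
    nextRow (seg S (n + 1)) = seg (nextSeq S) n := by
  apply List.ext_getElem
  · simp [nextRow, seg]
  · intro i _ _
    simp [nextRow, seg, List.getElem_zipWith, List.getElem_tail, nextSeq]

theorem triangleRows_seg_succ (S : ℕ → ZMod m) (n : ℕ) :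
    triangleRows (seg S (n + 1)) = seg S (n + 1) :: triangleRows (seg (nextSeq S) n) := by
  simp only [triangleRows, length_seg, List.range_succ_eq_map, List.map_cons, List.map_map]
  congr 1
  refine List.map_congr_left fun i _ => ?_
  simp [Function.iterate_succ_apply, nextRow_seg]

def segTriangle (S : ℕ → ZMod m) (n : ℕ) : Multiset (ZMod m) :=
  triangleEntries (seg S n)

theorem isBalanced_iff (l : List (ZMod m)) :
    IsBalanced l ↔ (triangleEntries l : Multiset (ZMod m)).IsBalanced := by
  simp only [IsBalanced, Multiset.IsBalanced, Multiset.coe_count]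

theorem segTriangle_succ (S : ℕ → ZMod m) (n : ℕ) :
    segTriangle S (n + 1) = seg S (n + 1) + segTriangle (nextSeq S) n := by
  simp [segTriangle, triangleEntries, triangleRows_seg_succ]

/-- The top `k` rows of the Steinhaus triangle of `seg S (n + k)`. -/
def trapezoid (S : ℕ → ZMod m) (k n : ℕ) : Multiset (ZMod m) :=
  ∑ i ∈ range k, (seg (nextSeq^[i] S) (n + k - i) : Multiset (ZMod m))

theorem segTriangle_add (S : ℕ → ZMod m) (n k : ℕ) :
    segTriangle S (n + k) = trapezoid S k n + segTriangle (nextSeq^[k] S) n := by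
  induction k generalizing S with
  | zero => simp [trapezoid]
  | succ k ih =>
    rw [← add_assoc, segTriangle_succ, ih, trapezoid, trapezoid, sum_range_succ', add_assoc]
    simp only [← add_assoc, add_comm, Function.iterate_succ_apply,
      Function.iterate_zero, id_eq, Nat.reduceSubDiff, tsub_zero]

end Triangle

section EventuallyPeriodic

variable {m : ℕ}

def nextPreperiod (I P : List (ZMod m)) : List (ZMod m) :=
  List.zipWith (· + ·) I (I.tail ++ [P.getD 0 0])

def nextPeriod (P : List (ZMod m)) : List (ZMod m) :=
  List.zipWith (· + ·) P (P.rotate 1)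

@[simp] theorem length_nextPreperiod (I P : List (ZMod m)) :
    (nextPreperiod I P).length = I.length := by
  simp only [nextPreperiod, List.length_zipWith, List.length_append, List.length_tail,
    List.length_singleton]
  omega

@[simp] theorem length_nextPeriod (P : List (ZMod m)) : (nextPeriod P).length = P.length := by
  simp [nextPeriod]

theorem nextSeq_evPeriodic (I P : List (ZMod m)) :
    nextSeq (evPeriodic I P) = evPeriodic (nextPreperiod I P) (nextPeriod P) := by
  funext i
  simp only [nextSeq, evPeriodic, length_nextPreperiod, length_nextPeriod]
  rcases lt_or_ge i I.length with hi | hi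
  · rw [if_pos hi, if_pos hi, List.getD_eq_getElem _ _ hi,
      List.getD_eq_getElem (nextPreperiod I P) 0 (by simpa using hi)]
    simp only [nextPreperiod, List.getElem_zipWith]
    by_cases hi' : i + 1 < I.length
    · rw [if_pos hi', List.getElem_append_left (by simpa using by omega), List.getElem_tail,
        List.getD_eq_getElem _ _ hi']
    · rw [if_neg hi', List.getElem_append_right (by simp; omega)]
      simp [show i + 1 - I.length = 0 by omega]
  · rw [if_neg (not_lt.2 hi), if_neg (by omega), if_neg (not_lt.2 hi),
      show i + 1 - I.length = i - I.length + 1 by omega]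
    rcases Nat.eq_zero_or_pos P.length with hP | hP
    · simp [List.length_eq_zero_iff.1 hP, nextPeriod]
    · rw [List.getD_eq_getElem (nextPeriod P) 0 (by simpa using Nat.mod_lt _ hP)]
      simp only [nextPeriod, List.getElem_zipWith, List.getElem_rotate]
      rw [List.getD_eq_getElem _ _ (Nat.mod_lt _ hP), List.getD_eq_getElem _ _ (Nat.mod_lt _ hP)]
      simp only [Nat.mod_add_mod]

def nextBlocks (B : List (ZMod m) × List (ZMod m)) : List (ZMod m) × List (ZMod m) :=
  (nextPreperiod B.1 B.2, nextPeriod B.2)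

theorem length_iterate_nextBlocks (B : List (ZMod m) × List (ZMod m)) (t : ℕ) :
    (nextBlocks^[t] B).1.length = B.1.length ∧ (nextBlocks^[t] B).2.length = B.2.length := by
  induction t with
  | zero => simp
  | succ t ih => simpa [Function.iterate_succ_apply', nextBlocks] using ih

theorem iterate_nextSeq_evPeriodic (B : List (ZMod m) × List (ZMod m)) (t : ℕ) :
    nextSeq^[t] (evPeriodic B.1 B.2) = evPeriodic (nextBlocks^[t] B).1 (nextBlocks^[t] B).2 :=
  have h : Function.Semiconj (fun B => evPeriodic B.1 B.2) nextBlocks nextSeq := fun B =>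
    (nextSeq_evPeriodic B.1 B.2).symm
  (h.iterate_right t B).symm

theorem seg_evPeriodic_add_length (I P : List (ZMod m)) {M : ℕ} (hM : I.length ≤ M) :
    (seg (evPeriodic I P) (M + P.length) : Multiset (ZMod m)) = seg (evPeriodic I P) M + P := by
  rw [seg, List.range_add, List.map_append, ← Multiset.coe_add, seg, List.map_map]
  congr 1
  refine Multiset.coe_eq_coe.2 (List.Perm.trans ?_ (List.rotate_perm P ((M - I.length) % P.length)))
  refine List.Perm.of_eq (List.ext_getElem (by simp) fun j h _ => ?_)
  simp only [List.length_map, List.length_range] at h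
  simp only [List.getElem_map, List.getElem_range, Function.comp_apply, List.getElem_rotate,
    evPeriodic, if_neg (show ¬ M + j < I.length by omega)]
  rw [List.getD_eq_getElem _ _ (Nat.mod_lt _ (by omega))]
  congr 1
  rw [Nat.add_mod_mod, show M + j - I.length = j + (M - I.length) by omega]

theorem trapezoid_evPeriodic_add_length (B : List (ZMod m) × List (ZMod m)) (k : ℕ) {M : ℕ}
    (hM : B.1.length ≤ M + 1) :
    trapezoid (evPeriodic B.1 B.2) k (M + B.2.length) =
      trapezoid (evPeriodic B.1 B.2) k M +
        ∑ i ∈ range k, ((nextBlocks^[i] B).2 : Multiset _) := by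
  rw [trapezoid, trapezoid, ← sum_add_distrib]
  refine sum_congr rfl fun i hi => ?_
  obtain ⟨hI, hP⟩ := length_iterate_nextBlocks B i
  have hi : i < k := mem_range.1 hi
  rw [iterate_nextSeq_evPeriodic, show M + B.2.length + k - i = M + k - i + B.2.length by omega,
    ← hP]
  exact seg_evPeriodic_add_length _ _ (by omega)

end EventuallyPeriodic

namespace S2

def blocks : List (ZMod 4) × List (ZMod 4) :=
  ([2,1,2,1,0,1,3,0], [2,0,0,1,3,2,0,2,2,1,1,2,0,0,2,1,1,0,2,2,0,1,3,0])

theorem eq_evPeriodic_blocks : S2 = evPeriodic blocks.1 blocks.2 := rfl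

theorem iterate_nextSeq_periodic : nextSeq^[24] (nextSeq^[8] S2) = nextSeq^[8] S2 := by
  rw [← Function.iterate_add_apply]
  rw [eq_evPeriodic_blocks, iterate_nextSeq_evPeriodic, iterate_nextSeq_evPeriodic,
    show nextBlocks^[32] blocks = nextBlocks^[8] blocks by decide]

theorem trapezoid_add_24 {n : ℕ} (hn : 7 ≤ n) :
    trapezoid S2 8 (n + 24) =
      trapezoid S2 8 n + ∑ i ∈ range 8, ((nextBlocks^[i] blocks).2 : Multiset _) :=
  trapezoid_evPeriodic_add_length blocks 8 (M := n) (by change 8 ≤ n + 1; omega)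

theorem trapezoid_iterate_add_24 {n : ℕ} (hn : 7 ≤ n) :
    trapezoid (nextSeq^[8] S2) 24 (n + 24) = trapezoid (nextSeq^[8] S2) 24 n +
      ∑ i ∈ range 24, ((nextBlocks^[i] (nextBlocks^[8] blocks)).2 : Multiset _) := by
  obtain ⟨hI, hP⟩ := length_iterate_nextBlocks blocks 8
  change _ = 8 at hI
  change _ = 24 at hP
  rw [eq_evPeriodic_blocks, iterate_nextSeq_evPeriodic, ← hP]
  exact trapezoid_evPeriodic_add_length _ 24 (by omega)

def increment (n : ℕ) : Multiset (ZMod 4) :=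
  ∑ i ∈ range 8, ((nextBlocks^[i] blocks).2 : Multiset (ZMod 4)) +
    trapezoid (nextSeq^[8] S2) 24 (8 * n)

theorem segTriangle_add_24 {n : ℕ} (hn : 1 ≤ n) :
    segTriangle S2 (8 * n + 32) = segTriangle S2 (8 * n + 8) + increment n := by
  rw [show 8 * n + 32 = 8 * n + 24 + 8 by omega, segTriangle_add, segTriangle_add,
    segTriangle_add S2 (8 * n) 8, iterate_nextSeq_periodic, trapezoid_add_24 (by omega), increment]
  abel

theorem increment_add_three {n : ℕ} (hn : 1 ≤ n) :
    increment (n + 3) = increment n +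
      ∑ i ∈ range 24, ((nextBlocks^[i] (nextBlocks^[8] blocks)).2 : Multiset _) := by
  rw [increment, increment, show 8 * (n + 3) = 8 * n + 24 by ring,
    trapezoid_iterate_add_24 (by omega), add_assoc]

theorem isBalanced_increment : ∀ n, (increment (n + 1)).IsBalanced
  | 0 | 1 | 2 => by decide +kernel
  | n + 3 => by
    rw [increment_add_three (by omega)]
    exact (isBalanced_increment n).add (by decide +kernel)

theorem isBalanced_segTriangle : ∀ n, (segTriangle S2 (8 * n)).IsBalanced
  | 0 | 1 | 2 | 3 | 4 => by decide +kernel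
  | n + 5 => by
    rw [show 8 * (n + 5) = 8 * (n + 1) + 32 by ring, segTriangle_add_24 (by omega)]
    exact (isBalanced_segTriangle (n + 2)).add (isBalanced_increment n)

end S2

theorem stmt2 (k : ℕ) :
    IsStronglyBalanced 8 (seg S2 (8 * k)) := by
  intro t ht
  rw [length_seg] at ht ⊢
  rw [show 8 * k - 8 * t = 8 * (k - t) by omega, take_seg S2 (by omega), isBalanced_iff]
  exact S2.isBalanced_segTriangle (k - t)
end

section
/- Let R_1,...,R_12 be the eventually periodic sequences in Z/2Z given by R_1 = 001(010000100001)^∞, R_2 = 0011110(001101010110)^∞, R_3 = 010(000101000010)^∞, R_4 = 0100001(010010111100001010111111)^∞, R_5 = 0100001(100100001001)^∞, R_6 = 0101011(010101100011)^∞, R_7 = 0101011(010111111101011010011101)^∞, R_8 = 010(101110110010)^∞, R_9 = 100(001000010100)^∞, R_10 = 1000010(110001101010)^∞, R_11 = 1111101(011000110101)^∞, R_12 = 111(110110000111)^∞. Then for every j with 1 ≤ j ≤ 12 and every integer k ≥ 0, the Steinhaus triangle of the initial segment R_j[4k+3] of length 4k+3 is strongly balanced in Z/2Z. -/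
def R1 : ℕ → ZMod 2 :=
  evPeriodic ([0,0,1] : List (ZMod 2)) ([0,1,0,0,0,0,1,0,0,0,0,1] : List (ZMod 2))

def R2 : ℕ → ZMod 2 :=
  evPeriodic ([0,0,1,1,1,1,0] : List (ZMod 2)) ([0,0,1,1,0,1,0,1,0,1,1,0] : List (ZMod 2))

def R3 : ℕ → ZMod 2 :=
  evPeriodic ([0,1,0] : List (ZMod 2)) ([0,0,0,1,0,1,0,0,0,0,1,0] : List (ZMod 2))

def R4 : ℕ → ZMod 2 :=
  evPeriodic ([0,1,0,0,0,0,1] : List (ZMod 2)) ([0,1,0,0,1,0,1,1,1,1,0,0,0,0,1,0,1,0,1,1,1,1,1,1] : List (ZMod 2))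

def R5 : ℕ → ZMod 2 :=
  evPeriodic ([0,1,0,0,0,0,1] : List (ZMod 2)) ([1,0,0,1,0,0,0,0,1,0,0,1] : List (ZMod 2))

def R6 : ℕ → ZMod 2 :=
  evPeriodic ([0,1,0,1,0,1,1] : List (ZMod 2)) ([0,1,0,1,0,1,1,0,0,0,1,1] : List (ZMod 2))

def R7 : ℕ → ZMod 2 :=
  evPeriodic ([0,1,0,1,0,1,1] : List (ZMod 2)) ([0,1,0,1,1,1,1,1,1,1,0,1,0,1,1,0,1,0,0,1,1,1,0,1] : List (ZMod 2))

def R8 : ℕ → ZMod 2 :=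
  evPeriodic ([0,1,0] : List (ZMod 2)) ([1,0,1,1,1,0,1,1,0,0,1,0] : List (ZMod 2))

def R9 : ℕ → ZMod 2 :=
  evPeriodic ([1,0,0] : List (ZMod 2)) ([0,0,1,0,0,0,0,1,0,1,0,0] : List (ZMod 2))

def R10 : ℕ → ZMod 2 :=
  evPeriodic ([1,0,0,0,0,1,0] : List (ZMod 2)) ([1,1,0,0,0,1,1,0,1,0,1,0] : List (ZMod 2))

def R11 : ℕ → ZMod 2 :=
  evPeriodic ([1,1,1,1,1,0,1] : List (ZMod 2)) ([0,1,1,0,0,0,1,1,0,1,0,1] : List (ZMod 2))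

def R12 : ℕ → ZMod 2 :=
  evPeriodic ([1,1,1] : List (ZMod 2)) ([1,1,0,1,1,0,0,0,0,1,1,1] : List (ZMod 2))

/-!
Write `f n` for the number of ones in the Steinhaus triangle of `S[n]` over `ZMod 2`; the triangle
of `S[4k+3]` is balanced iff `f (4k+3) = (4k+3)(k+1)`. Row `i` of that triangle is the initial
segment of length `n - i` of `nextSeq^[i] S`, where `nextSeq S j = S j + S (j+1)`. If `S` is
periodic with period `p` from index `L` on, then so is every `nextSeq^[i] S`, and if moreover
`nextSeq^[ρ+q] S = nextSeq^[ρ] S`, comparing the triangles of sizes `n`, `n+p`, `n+q`, `n+p+q` row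
by row gives `f (n+p+q) + f n = f (n+p) + f (n+q) + C` for `n ≥ L + ρ`, where `C` is the number of
ones in the block of rows `ρ, …, ρ+q-1` and columns `L, …, L+p-1`. For `p = q = 4s` and `C = 8s²`
this is the second-difference equation that `(4k+3)(k+1)` satisfies along `k ↦ k + s`, so finitely
many initial values decide balance for every `k`; for each `R_j` these, the periods and `C` are
finite computations. Strong balance follows because `S[4k+3-4t] = S[4(k-t)+3]`.
-/

open Finset Function

namespace Steinhaus

def IsPeriodicFrom {α : Type*} (L p : ℕ) (S : ℕ → α) : Prop :=
  ∀ j, L ≤ j → S (j + p) = S j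

theorem isPeriodicFrom_iterate_of_isPeriodicPt {α : Type*} {f : α → α} {x : α} {ρ q : ℕ}
    (h : IsPeriodicPt f q (f^[ρ] x)) : IsPeriodicFrom ρ q (fun i => f^[i] x) := by
  intro i hi
  obtain ⟨d, rfl⟩ := Nat.exists_eq_add_of_le hi
  have : IsPeriodicPt f q (f^[ρ + d] x) := by
    rw [add_comm, iterate_add_apply]
    exact h.apply_iterate d
  simpa only [add_comm _ q, iterate_add_apply] using this.eq

variable {m : ℕ}

def nextSeq (S : ℕ → ZMod m) : ℕ → ZMod m := fun j => S j + S (j + 1)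

section Segments

variable (S : ℕ → ZMod m)

@[simp]
theorem length_seg (n : ℕ) : (seg S n).length = n := by
  simp [seg]

theorem seg_add (a b : ℕ) : seg S (a + b) = seg S a ++ seg (fun j => S (a + j)) b := by
  simp [seg, List.range_add]

theorem take_seg (n l : ℕ) : (seg S n).take l = seg S (min l n) := by
  simp only [seg, ← List.map_take, List.take_range]

theorem count_seg_succ (a : ZMod m) (n : ℕ) :
    (seg S (n + 1)).count a = (seg S n).count a + if S n = a then 1 else 0 := by
  rw [seg_add, List.count_append]
  simp [seg, List.count_singleton]

theorem nextRow_seg (n : ℕ) : nextRow (seg S (n + 1)) = seg (nextSeq S) n := by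
  apply List.ext_getElem
  · simp [nextRow]
  · intro i _ _
    simp [nextRow, seg, nextSeq, List.getElem_zipWith, List.getElem_tail]

theorem iterate_nextRow_seg (i n : ℕ) : nextRow^[i] (seg S (i + n)) = seg (nextSeq^[i] S) n := by
  induction i generalizing S with
  | zero => simp
  | succ i ih =>
    rw [show i + 1 + n = i + n + 1 by omega, iterate_succ_apply, nextRow_seg, ih,
      ← iterate_succ_apply]

theorem triangleEntries_seg (n : ℕ) :
    triangleEntries (seg S n) = ((List.range n).map fun i => seg (nextSeq^[i] S) (n - i)).flatten := by
  rw [triangleEntries, triangleRows, length_seg]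
  congr 1
  refine List.map_congr_left fun i hi => ?_
  rw [← iterate_nextRow_seg, Nat.add_sub_cancel' (List.mem_range.mp hi).le]

theorem count_triangleEntries_seg (a : ZMod m) (n : ℕ) :
    (triangleEntries (seg S n)).count a = ∑ i ∈ range n, (seg (nextSeq^[i] S) (n - i)).count a := by
  rw [triangleEntries_seg, List.count_flatten, List.map_map]
  rfl

end Segments

theorem length_nextRow (l : List (ZMod m)) : (nextRow l).length = l.length - 1 := by
  simp [nextRow]

theorem two_mul_length_triangleEntries (l : List (ZMod m)) :
    2 * (triangleEntries l).length = l.length * (l.length + 1) := by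
  have hrow : ∀ i, (nextRow^[i] l).length = l.length - i := by
    intro i
    induction i with
    | zero => rfl
    | succ i ih => rw [iterate_succ_apply', length_nextRow, ih]; omega
  rw [triangleEntries, List.length_flatten, triangleRows, List.map_map]
  have : ((List.range l.length).map ((List.length ∘ fun i => nextRow^[i] l))).sum
      = ∑ i ∈ range l.length, (l.length - i) := by
    simp only [comp_def, hrow]; rfl
  have hreflect : ∑ i ∈ range l.length, (l.length - i) = ∑ i ∈ range (l.length + 1), i := by
    rw [sum_range_succ', ← sum_range_reflect]
    exact sum_congr rfl fun i hi => by have := mem_range.mp hi; omega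
  rw [this, hreflect, mul_comm, sum_range_id_mul_two, Nat.add_sub_cancel, mul_comm]

namespace IsPeriodicFrom

variable {L p : ℕ} {S : ℕ → ZMod m}

theorem nextSeq (h : IsPeriodicFrom L p S) : IsPeriodicFrom L p (nextSeq S) := by
  intro j hj
  simp only [Steinhaus.nextSeq, add_right_comm j p 1, h j hj, h (j + 1) (by omega)]

theorem iterate_nextSeq (h : IsPeriodicFrom L p S) (i : ℕ) :
    IsPeriodicFrom L p (Steinhaus.nextSeq^[i] S) := by
  induction i with
  | zero => exact h
  | succ i ih => rw [iterate_succ_apply']; exact ih.nextSeq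

theorem eq_of_seg_eq {T : ℕ → ZMod m} (hp : 0 < p) (hS : IsPeriodicFrom L p S)
    (hT : IsPeriodicFrom L p T) (h : seg S (L + p) = seg T (L + p)) : S = T := by
  funext j
  induction j using Nat.strong_induction_on with
  | _ j ih =>
    by_cases hj : j < L + p
    · simpa [seg, hj] using congrArg (·[j]?) h
    · obtain ⟨i, rfl⟩ : ∃ i, j = i + p := ⟨j - p, by omega⟩
      rw [hS i (by omega), hT i (by omega), ih i (by omega)]

theorem count_seg_add (h : IsPeriodicFrom L p S) (a : ZMod m) {w : ℕ} (hw : L ≤ w) :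
    (seg S (w + p)).count a = (seg S w).count a + (seg (fun j => S (L + j)) p).count a := by
  induction w, hw using Nat.le_induction with
  | base => rw [seg_add, List.count_append]
  | succ w hw ih =>
    rw [add_right_comm, count_seg_succ, ih, h w hw, count_seg_succ]
    omega

end IsPeriodicFrom

theorem isPeriodicFrom_evPeriodic {I P : List (ZMod m)} {L p : ℕ} (hI : I.length = L)
    (hP : P.length = p) : IsPeriodicFrom L p (evPeriodic I P) := by
  subst hI hP
  intro j hj
  simp only [evPeriodic, if_neg (show ¬ j + P.length < I.length by omega),
    if_neg (show ¬ j < I.length by omega)]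
  rw [Nat.sub_add_comm hj, Nat.add_mod_right]

section Recurrence

variable {S : ℕ → ZMod m} (a : ZMod m) {L p ρ q n : ℕ}

theorem count_triangleEntries_seg_add_of_isPeriodicFrom
    (hT : IsPeriodicFrom ρ q (fun i => nextSeq^[i] S)) (hn : ρ ≤ n) :
    (triangleEntries (seg S (n + q))).count a
        + ∑ i ∈ range ρ, (seg (nextSeq^[i] S) (n - i)).count a
      = ∑ i ∈ range (ρ + q), (seg (nextSeq^[i] S) (n + q - i)).count a
        + (triangleEntries (seg S n)).count a := by
  obtain ⟨d, rfl⟩ := Nat.exists_eq_add_of_le hn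
  have hperiod : ∑ i ∈ range d, (seg (nextSeq^[ρ + q + i] S) (ρ + q + d - (ρ + q + i))).count a
      = ∑ i ∈ range d, (seg (nextSeq^[ρ + i] S) (ρ + d - (ρ + i))).count a := by
    refine sum_congr rfl fun i _ => ?_
    have hrow : nextSeq^[ρ + i + q] S = nextSeq^[ρ + i] S := hT (ρ + i) (by omega)
    rw [add_right_comm ρ q i, hrow, show ρ + q + d - (ρ + i + q) = ρ + d - (ρ + i) by omega]
  rw [count_triangleEntries_seg, count_triangleEntries_seg, add_right_comm ρ d q,
    sum_range_add _ (ρ + q) d, sum_range_add _ ρ d, hperiod]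
  ring

theorem sum_count_seg_add_of_isPeriodicFrom (hS : IsPeriodicFrom L p S) {r : ℕ} (hn : L + r ≤ n) :
    ∑ i ∈ range r, (seg (nextSeq^[i] S) (n + p - i)).count a
      = ∑ i ∈ range r, (seg (nextSeq^[i] S) (n - i)).count a
        + ∑ i ∈ range r, (seg (fun j => nextSeq^[i] S (L + j)) p).count a := by
  rw [← sum_add_distrib]
  refine sum_congr rfl fun i hi => ?_
  have := mem_range.mp hi
  rw [show n + p - i = n - i + p by omega, (hS.iterate_nextSeq i).count_seg_add a (by omega)]

theorem count_triangleEntries_seg_add_add (hS : IsPeriodicFrom L p S)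
    (hrows : IsPeriodicPt nextSeq q (nextSeq^[ρ] S)) (hn : L + ρ ≤ n) :
    (triangleEntries (seg S (n + p + q))).count a + (triangleEntries (seg S n)).count a
      = (triangleEntries (seg S (n + p))).count a + (triangleEntries (seg S (n + q))).count a
        + ∑ i ∈ range q, (seg (fun j => nextSeq^[ρ + i] S (L + j)) p).count a := by
  have hT := isPeriodicFrom_iterate_of_isPeriodicPt hrows
  have h₁ := count_triangleEntries_seg_add_of_isPeriodicFrom a hT (n := n) (by omega)
  have h₂ := count_triangleEntries_seg_add_of_isPeriodicFrom a hT (n := n + p) (by omega)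
  have hA := sum_count_seg_add_of_isPeriodicFrom a hS (r := ρ + q) (n := n + q) (by omega)
  have hB := sum_count_seg_add_of_isPeriodicFrom a hS (r := ρ) (n := n) (by omega)
  rw [sum_range_add (fun i => (seg (fun j => nextSeq^[i] S (L + j)) p).count a),
    add_right_comm n q p] at hA
  omega

end Recurrence

theorem eq_of_second_difference {M : Type*} [AddCancelCommMonoid M] {u v : ℕ → M} {s K : ℕ}
    {c : M} (hs : 0 < s) (hu : ∀ k, K ≤ k → u (k + s + s) + u k = u (k + s) + u (k + s) + c)
    (hv : ∀ k, K ≤ k → v (k + s + s) + v k = v (k + s) + v (k + s) + c)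
    (hbase : ∀ k < K + s + s, u k = v k) : u = v := by
  funext k
  induction k using Nat.strong_induction_on with
  | _ k ih =>
    by_cases hk : k < K + s + s
    · exact hbase k hk
    obtain ⟨k, rfl⟩ : ∃ j, k = j + s + s := ⟨k - s - s, by omega⟩
    apply add_right_cancel (b := u k)
    rw [hu k (by omega), ih (k + s) (by omega), ← hv k (by omega), ih k (by omega)]

theorem count_zero_add_count_one (l : List (ZMod 2)) : l.count 0 + l.count 1 = l.length := by
  induction l with
  | nil => rfl
  | cons x l ih =>
    have hx : x = 0 ∨ x = 1 := by revert x; decide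
    rcases hx with rfl | rfl <;> simp <;> omega

theorem isBalanced_iff_four_mul_count_one (l : List (ZMod 2)) :
    IsBalanced l ↔ 4 * (triangleEntries l).count 1 = l.length * (l.length + 1) := by
  have h₀ := count_zero_add_count_one (triangleEntries l)
  have h₁ := two_mul_length_triangleEntries l
  have hZ : ∀ c : ZMod 2, c = 0 ∨ c = 1 := by decide
  constructor
  · intro h
    have := h 0 1
    omega
  · intro h a b
    rcases hZ a with rfl | rfl <;> rcases hZ b with rfl | rfl <;> omega

theorem isBalanced_seg_iff (S : ℕ → ZMod 2) (k : ℕ) :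
    IsBalanced (seg S (4 * k + 3))
      ↔ (triangleEntries (seg S (4 * k + 3))).count 1 = (4 * k + 3) * (k + 1) := by
  rw [isBalanced_iff_four_mul_count_one, length_seg,
    show (4 * k + 3) * (4 * k + 3 + 1) = 4 * ((4 * k + 3) * (k + 1)) by ring]
  omega

theorem isBalanced_seg_of_isPeriodicFrom {S : ℕ → ZMod 2} {L s ρ K : ℕ} (hs : 0 < s)
    (hS : IsPeriodicFrom L (4 * s) S)
    (hrows : seg (nextSeq^[ρ + 4 * s] S) (L + 4 * s) = seg (nextSeq^[ρ] S) (L + 4 * s))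
    (hblock : ∑ i ∈ range (4 * s), (seg (fun j => nextSeq^[ρ + i] S (L + j)) (4 * s)).count 1
      = 8 * s * s)
    (hK : L + ρ ≤ 4 * K + 3)
    (hbase : ∀ k < K + s + s, (triangleEntries (seg S (4 * k + 3))).count 1 = (4 * k + 3) * (k + 1))
    (k : ℕ) : IsBalanced (seg S (4 * k + 3)) := by
  have hperiod : IsPeriodicPt nextSeq (4 * s) (nextSeq^[ρ] S) := by
    rw [IsPeriodicPt, IsFixedPt, ← iterate_add_apply, add_comm]
    exact (hS.iterate_nextSeq _).eq_of_seg_eq (by omega) (hS.iterate_nextSeq _) hrows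
  have hcount : (fun k => (triangleEntries (seg S (4 * k + 3))).count 1)
      = fun k => (4 * k + 3) * (k + 1) := by
    refine eq_of_second_difference (c := 8 * s * s) hs (fun k hk => ?_) (fun k _ => by ring)
      hbase
    have := count_triangleEntries_seg_add_add 1 hS hperiod (n := 4 * k + 3) (by omega)
    rwa [hblock, show 4 * k + 3 + 4 * s + 4 * s = 4 * (k + s + s) + 3 by ring,
      show 4 * k + 3 + 4 * s = 4 * (k + s) + 3 by ring] at this
  exact (isBalanced_seg_iff S k).mpr (congrFun hcount k)

theorem isStronglyBalanced_seg {S : ℕ → ZMod m} {d r : ℕ} (hr : r < d)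
    (h : ∀ k, IsBalanced (seg S (d * k + r))) (k : ℕ) : IsStronglyBalanced d (seg S (d * k + r)) := by
  intro t ht
  rw [length_seg] at ht ⊢
  have htk : t ≤ k := by
    by_contra! hkt
    have := Nat.mul_le_mul_left d (Nat.succ_le_of_lt hkt)
    rw [Nat.mul_succ] at this
    omega
  have hsub : d * k + r - d * t = d * (k - t) + r := by
    rw [Nat.mul_sub]
    have := Nat.mul_le_mul_left d htk
    omega
  rw [hsub, take_seg, min_eq_left (by omega)]
  exact h _

section Instances

set_option maxRecDepth 10000

theorem isBalanced_seg_R1 (k : ℕ) : IsBalanced (seg R1 (4 * k + 3)) :=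
  isBalanced_seg_of_isPeriodicFrom (L := 3) (s := 3) (ρ := 4) (K := 1) (by norm_num)
    (isPeriodicFrom_evPeriodic rfl rfl) (by decide) (by decide) (by norm_num) (by decide) k

theorem isBalanced_seg_R2 (k : ℕ) : IsBalanced (seg R2 (4 * k + 3)) :=
  isBalanced_seg_of_isPeriodicFrom (L := 7) (s := 3) (ρ := 0) (K := 1) (by norm_num)
    (isPeriodicFrom_evPeriodic rfl rfl) (by decide) (by decide) (by norm_num) (by decide) k

theorem isBalanced_seg_R3 (k : ℕ) : IsBalanced (seg R3 (4 * k + 3)) :=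
  isBalanced_seg_of_isPeriodicFrom (L := 3) (s := 3) (ρ := 4) (K := 1) (by norm_num)
    (isPeriodicFrom_evPeriodic rfl rfl) (by decide) (by decide) (by norm_num) (by decide) k

theorem isBalanced_seg_R4 (k : ℕ) : IsBalanced (seg R4 (4 * k + 3)) :=
  isBalanced_seg_of_isPeriodicFrom (L := 7) (s := 6) (ρ := 6) (K := 3) (by norm_num)
    (isPeriodicFrom_evPeriodic rfl rfl) (by decide) (by decide) (by norm_num) (by decide) k

theorem isBalanced_seg_R5 (k : ℕ) : IsBalanced (seg R5 (4 * k + 3)) :=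
  isBalanced_seg_of_isPeriodicFrom (L := 7) (s := 3) (ρ := 0) (K := 1) (by norm_num)
    (isPeriodicFrom_evPeriodic rfl rfl) (by decide) (by decide) (by norm_num) (by decide) k

theorem isBalanced_seg_R6 (k : ℕ) : IsBalanced (seg R6 (4 * k + 3)) :=
  isBalanced_seg_of_isPeriodicFrom (L := 7) (s := 3) (ρ := 0) (K := 1) (by norm_num)
    (isPeriodicFrom_evPeriodic rfl rfl) (by decide) (by decide) (by norm_num) (by decide) k

theorem isBalanced_seg_R7 (k : ℕ) : IsBalanced (seg R7 (4 * k + 3)) :=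
  isBalanced_seg_of_isPeriodicFrom (L := 7) (s := 6) (ρ := 6) (K := 3) (by norm_num)
    (isPeriodicFrom_evPeriodic rfl rfl) (by decide) (by decide) (by norm_num) (by decide) k

theorem isBalanced_seg_R8 (k : ℕ) : IsBalanced (seg R8 (4 * k + 3)) :=
  isBalanced_seg_of_isPeriodicFrom (L := 3) (s := 3) (ρ := 4) (K := 1) (by norm_num)
    (isPeriodicFrom_evPeriodic rfl rfl) (by decide) (by decide) (by norm_num) (by decide) k

theorem isBalanced_seg_R9 (k : ℕ) : IsBalanced (seg R9 (4 * k + 3)) :=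
  isBalanced_seg_of_isPeriodicFrom (L := 3) (s := 3) (ρ := 4) (K := 1) (by norm_num)
    (isPeriodicFrom_evPeriodic rfl rfl) (by decide) (by decide) (by norm_num) (by decide) k

theorem isBalanced_seg_R10 (k : ℕ) : IsBalanced (seg R10 (4 * k + 3)) :=
  isBalanced_seg_of_isPeriodicFrom (L := 7) (s := 3) (ρ := 0) (K := 1) (by norm_num)
    (isPeriodicFrom_evPeriodic rfl rfl) (by decide) (by decide) (by norm_num) (by decide) k

theorem isBalanced_seg_R11 (k : ℕ) : IsBalanced (seg R11 (4 * k + 3)) :=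
  isBalanced_seg_of_isPeriodicFrom (L := 7) (s := 3) (ρ := 0) (K := 1) (by norm_num)
    (isPeriodicFrom_evPeriodic rfl rfl) (by decide) (by decide) (by norm_num) (by decide) k

theorem isBalanced_seg_R12 (k : ℕ) : IsBalanced (seg R12 (4 * k + 3)) :=
  isBalanced_seg_of_isPeriodicFrom (L := 3) (s := 3) (ρ := 4) (K := 1) (by norm_num)
    (isPeriodicFrom_evPeriodic rfl rfl) (by decide) (by decide) (by norm_num) (by decide) k

end Instances

end Steinhaus

open Steinhaus in
theorem stmt12 (k : ℕ) :
    IsStronglyBalanced 4 (seg R1 (4 * k + 3)) ∧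
    IsStronglyBalanced 4 (seg R2 (4 * k + 3)) ∧
    IsStronglyBalanced 4 (seg R3 (4 * k + 3)) ∧
    IsStronglyBalanced 4 (seg R4 (4 * k + 3)) ∧
    IsStronglyBalanced 4 (seg R5 (4 * k + 3)) ∧
    IsStronglyBalanced 4 (seg R6 (4 * k + 3)) ∧
    IsStronglyBalanced 4 (seg R7 (4 * k + 3)) ∧
    IsStronglyBalanced 4 (seg R8 (4 * k + 3)) ∧
    IsStronglyBalanced 4 (seg R9 (4 * k + 3)) ∧
    IsStronglyBalanced 4 (seg R10 (4 * k + 3)) ∧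
    IsStronglyBalanced 4 (seg R11 (4 * k + 3)) ∧
    IsStronglyBalanced 4 (seg R12 (4 * k + 3)) :=
  ⟨isStronglyBalanced_seg (by norm_num) isBalanced_seg_R1 k,
   isStronglyBalanced_seg (by norm_num) isBalanced_seg_R2 k,
   isStronglyBalanced_seg (by norm_num) isBalanced_seg_R3 k,
   isStronglyBalanced_seg (by norm_num) isBalanced_seg_R4 k,
   isStronglyBalanced_seg (by norm_num) isBalanced_seg_R5 k,
   isStronglyBalanced_seg (by norm_num) isBalanced_seg_R6 k,
   isStronglyBalanced_seg (by norm_num) isBalanced_seg_R7 k,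
   isStronglyBalanced_seg (by norm_num) isBalanced_seg_R8 k,
   isStronglyBalanced_seg (by norm_num) isBalanced_seg_R9 k,
   isStronglyBalanced_seg (by norm_num) isBalanced_seg_R10 k,
   isStronglyBalanced_seg (by norm_num) isBalanced_seg_R11 k,
   isStronglyBalanced_seg (by norm_num) isBalanced_seg_R12 k⟩
end

section
/- Let R_1 = 001(010000100001)^∞ and R_2 = 0011110(001101010110)^∞ be eventually periodic sequences in Z/2Z, and let π : Z/4Z → Z/2Z be the canonical quotient map applied entrywise. Then for every n ≥ 1 there is no sequence U of length n in Z/4Z with π(U) = R_1[n] such that ∇U is strongly balanced, and likewise there is no such strongly balanced lift of any initial segment R_2[n] with n ≥ 1. -/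
/-- The canonical quotient map `ZMod 4 → ZMod 2`. -/
def π : ZMod 4 →+* ZMod 2 := ZMod.castHom (show (2:ℕ) ∣ 4 by norm_num) (ZMod 2)


/-!
A Steinhaus triangle with first row of length `n` has `n(n+1)/2` entries, so a balanced triangle
over `ZMod 4` forces `8 ∣ n(n+1)`, i.e. `n ≡ 0` or `7 (mod 8)`. Cutting blocks of 8 off a strongly
balanced `U` of length `n ≥ 1` therefore reaches a balanced initial segment of length 7 or 8, and a
finite search over the `2⁷ + 2⁸` lifts of `R[7]` and `R[8]` shows that for `R = R1, R2` none is
balanced.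
-/

lemma length_nextRow {m : ℕ} (l : List (ZMod m)) : (nextRow l).length = l.length - 1 := by
  simp [nextRow]

lemma length_iterate_nextRow {m : ℕ} (i : ℕ) (l : List (ZMod m)) :
    (nextRow^[i] l).length = l.length - i := by
  induction i generalizing l with
  | zero => rfl
  | succ k ih =>
    rw [Function.iterate_succ_apply, ih, length_nextRow]
    omega

lemma List.sum_map_range {M : Type*} [AddCommMonoid M] (f : ℕ → M) (n : ℕ) :
    ((List.range n).map f).sum = ∑ i ∈ Finset.range n, f i := by
  rw [Finset.sum, Finset.range_val, Multiset.range, Multiset.map_coe, Multiset.sum_coe]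

lemma two_mul_length_triangleEntries {m : ℕ} (l : List (ZMod m)) :
    2 * (triangleEntries l).length = l.length * (l.length + 1) := by
  simp only [triangleEntries, triangleRows, List.length_flatten, List.map_map, Function.comp_def,
    length_iterate_nextRow, List.sum_map_range]
  generalize l.length = n
  have gauss := Finset.sum_range_id_mul_two (n + 1)
  rw [Finset.sum_range_succ'] at gauss
  rw [← Finset.sum_range_reflect,
    Finset.sum_congr rfl (fun i hi => show n - (n - 1 - i) = i + 1 by simp at hi; omega)]
  simpa [mul_comm] using gauss

lemma List.sum_count_eq_length {α : Type*} [Fintype α] [DecidableEq α] (l : List α) :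
    ∑ a, l.count a = l.length := by
  have := Multiset.toFinset_sum_count_eq (l : Multiset α)
  rw [Finset.sum_subset (Finset.subset_univ _)
    (fun a _ ha => Multiset.count_eq_zero.2 (by simpa using ha))] at this
  simpa using this

lemma dvd_length_triangleEntries_of_isBalanced {m : ℕ} [NeZero m] {l : List (ZMod m)}
    (h : IsBalanced l) : m ∣ (triangleEntries l).length := by
  refine ⟨(triangleEntries l).count 0, ?_⟩
  rw [← List.sum_count_eq_length, Finset.sum_congr rfl (fun a _ => h a 0), Finset.sum_const,
    Finset.card_univ, ZMod.card, smul_eq_mul]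

lemma length_mod_eight_of_isBalanced {l : List (ZMod 4)} (h : IsBalanced l) :
    l.length % 8 = 0 ∨ l.length % 8 = 7 := by
  have h8 : 8 ∣ l.length * (l.length + 1) := by
    rw [← two_mul_length_triangleEntries]
    exact mul_dvd_mul_left 2 (dvd_length_triangleEntries_of_isBalanced h)
  rw [← ZMod.natCast_eq_zero_iff, Nat.cast_mul, Nat.cast_succ] at h8
  rw [← ZMod.val_natCast]
  generalize (l.length : ZMod 8) = x at h8 ⊢
  revert x
  decide

lemma exists_isBalanced_take_of_isStronglyBalanced {U : List (ZMod 4)} (hU : 0 < U.length)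
    (h : IsStronglyBalanced 8 U) : ∃ k ∈ [7, 8], k ≤ U.length ∧ IsBalanced (U.take k) := by
  -- the length in `[1, 8]` congruent to `U.length` modulo 8
  set k := U.length - 8 * ((U.length - 1) / 8) with hk
  have hbal : IsBalanced (U.take k) := h _ (by omega)
  have hmod := length_mod_eight_of_isBalanced hbal
  rw [List.length_take, min_eq_left (by omega)] at hmod
  refine ⟨k, ?_, by omega, hbal⟩
  simp only [List.mem_cons, List.not_mem_nil, or_false]
  omega

def lifts (L : List (ZMod 2)) : List (List (ZMod 4)) :=
  (L.map fun a => [(a.val : ZMod 4), a.val + 2]).sections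

lemma mem_lifts {U : List (ZMod 4)} : U ∈ lifts (U.map π) := by
  rw [lifts, List.map_map, List.mem_sections, List.forall₂_map_right_iff, List.forall₂_same]
  have mem_fiber : ∀ x : ZMod 4, x ∈ [((π x).val : ZMod 4), (π x).val + 2] := by decide
  exact fun x _ => mem_fiber x

lemma seg_take {m : ℕ} (R : ℕ → ZMod m) {k n : ℕ} (h : k ≤ n) : (seg R n).take k = seg R k := by
  simp [seg, ← List.map_take, List.take_range, min_eq_left h]

lemma not_isStronglyBalanced_of_forall_lifts {R : ℕ → ZMod 2}
    (hR : ∀ k ∈ [7, 8], ∀ V ∈ lifts (seg R k), ¬ IsBalanced V) {U : List (ZMod 4)}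
    (hU : 0 < U.length) (hmap : U.map π = seg R U.length) : ¬ IsStronglyBalanced 8 U := by
  intro h
  obtain ⟨k, hk, hkU, hbal⟩ := exists_isBalanced_take_of_isStronglyBalanced hU h
  refine hR k hk _ ?_ hbal
  rw [← seg_take R hkU, ← hmap, ← List.map_take]
  exact mem_lifts

instance {m : ℕ} [NeZero m] : DecidablePred (IsBalanced (m := m)) :=
  fun l => by unfold IsBalanced; infer_instance

set_option maxRecDepth 10000 in
lemma not_isBalanced_of_mem_lifts_seg_R1 :
    ∀ k ∈ [7, 8], ∀ V ∈ lifts (seg R1 k), ¬ IsBalanced V := by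
  decide

set_option maxRecDepth 10000 in
lemma not_isBalanced_of_mem_lifts_seg_R2 :
    ∀ k ∈ [7, 8], ∀ V ∈ lifts (seg R2 k), ¬ IsBalanced V := by
  decide

theorem stmt16 :
    (∀ n : ℕ, 1 ≤ n → ∀ U : List (ZMod 4), U.length = n → U.map π = seg R1 n →
      ¬ IsStronglyBalanced 8 U) ∧
    (∀ n : ℕ, 1 ≤ n → ∀ U : List (ZMod 4), U.length = n → U.map π = seg R2 n →
      ¬ IsStronglyBalanced 8 U) :=
  ⟨fun _ hn _ hU hmap => not_isStronglyBalanced_of_forall_lifts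
      not_isBalanced_of_mem_lifts_seg_R1 (hU ▸ hn) (hU ▸ hmap),
    fun _ hn _ hU hmap => not_isStronglyBalanced_of_forall_lifts
      not_isBalanced_of_mem_lifts_seg_R2 (hU ▸ hn) (hU ▸ hmap)⟩
end
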